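/- Let D be a 3-dicritical digraph distinct from the bidirected complete graph ↔K3 and from the directed wheel W3, and let ↔T be a bidirected tree contained in D, corresponding to a tree T. Then the number of unordered pairs {u, v} of vertices of T such that neither the arc uv nor the arc vu is in D is at least dearth(T). -/

import Mathlib

/-- A (loopless, simple) digraph on vertex type `V`. -/
structure SimpleDigraph (V : Type) where
  Adj : V → V → Prop
  loopless : ∀ v, ¬ Adj v v

namespace SimpleDigraph

/-- A set of arcs (given as a relation) is acyclic if it admits no directed closed walk. -/
def AcyclicRel {V : Type} (A : V → V → Prop) : Prop :=
  ∀ v, ¬ Relation.TransGen A v v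

/-- A set of arcs is 2-dicolourable if the vertices can be coloured with two colours
so that each colour class induces an acyclic subdigraph. -/
def Dicolourable2Rel {V : Type} (A : V → V → Prop) : Prop :=
  ∃ φ : V → Fin 2, ∀ i : Fin 2,
    AcyclicRel (fun a b => A a b ∧ φ a = i ∧ φ b = i)

/-- A digraph is 2-dicolourable if its vertices can be coloured with two colours
so that each colour class induces an acyclic subdigraph. -/
def Dicolourable2 {V : Type} (D : SimpleDigraph V) : Prop :=
  Dicolourable2Rel D.Adj

/-- `(S, A)` describes a subdigraph of `D`: its vertex set is `S` and its arcs
are given by `A`, which must join vertices of `S` and be arcs of `D`. -/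
def IsSubdigraphOn {V : Type} (D : SimpleDigraph V) (S : Set V) (A : V → V → Prop) : Prop :=
  ∀ u v, A u v → u ∈ S ∧ v ∈ S ∧ D.Adj u v

/-- `D` is 3-dicritical: `D` is not 2-dicolourable, but every proper subdigraph of `D`
(one missing a vertex or an arc) is 2-dicolourable. -/
def Dicritical3 {V : Type} (D : SimpleDigraph V) : Prop :=
  ¬ D.Dicolourable2 ∧
    ∀ (S : Set V) (A : V → V → Prop), D.IsSubdigraphOn S A →
      (S ≠ Set.univ ∨ A ≠ D.Adj) → Dicolourable2Rel A

/-- A digraph is semi-complete if any two distinct vertices are joined by at least one arc. -/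
def SemiComplete {V : Type} (D : SimpleDigraph V) : Prop :=
  ∀ u v : V, u ≠ v → D.Adj u v ∨ D.Adj v u

/-- A tournament is a semi-complete digraph with no digon. -/
def IsTournament {V : Type} (D : SimpleDigraph V) : Prop :=
  D.SemiComplete ∧ ∀ u v : V, ¬ (D.Adj u v ∧ D.Adj v u)

/-- Isomorphism of digraphs. -/
def Iso {V W : Type} (D : SimpleDigraph V) (E : SimpleDigraph W) : Prop :=
  ∃ e : V ≃ W, ∀ u v : V, D.Adj u v ↔ E.Adj (e u) (e v)

/-- `D` contains (a copy of) `H` as a subdigraph. -/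
def ContainsSub {V W : Type} (D : SimpleDigraph V) (H : SimpleDigraph W) : Prop :=
  ∃ f : W → V, Function.Injective f ∧ ∀ a b, H.Adj a b → D.Adj (f a) (f b)

/-- `D` contains (a copy of) `H` as an induced subdigraph. -/
def ContainsInduced {V W : Type} (D : SimpleDigraph V) (H : SimpleDigraph W) : Prop :=
  ∃ f : W → V, Function.Injective f ∧ ∀ a b, H.Adj a b ↔ D.Adj (f a) (f b)

end SimpleDigraph

/-- An auxiliary constructor: the digraph on `Fin n` whose arcs are the pairs in `l`. -/
def digraphOfPairs (n : ℕ) (l : List (ℕ × ℕ)) (h : ∀ v : Fin n, (v.val, v.val) ∉ l) :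
    SimpleDigraph (Fin n) :=
  ⟨fun u v => (u.val, v.val) ∈ l, h⟩

/-- The bidirected complete graph `↔K2` on two vertices (a digon). -/
def biK2 : SimpleDigraph (Fin 2) :=
  ⟨fun u v => u ≠ v, fun v h => h rfl⟩

/-- The bidirected complete graph `↔K3` on three vertices. -/
def biK3 : SimpleDigraph (Fin 3) :=
  ⟨fun u v => u ≠ v, fun v h => h rfl⟩

/-- The directed cycle `C3` on three vertices. -/
def dirC3 : SimpleDigraph (Fin 3) :=
  ⟨fun u v => v = u + 1, by decide⟩

/-- The directed wheel `W3`: a directed triangle `0 → 1 → 2 → 0` together with a hub `3`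
joined by a digon to each triangle vertex. -/
def dirW3 : SimpleDigraph (Fin 4) :=
  digraphOfPairs 4 [(3,0),(0,3),(3,1),(1,3),(3,2),(2,3),(0,1),(1,2),(2,0)] (by decide)

/-- The digraph `H5` on vertices `u0, …, u4`: digons between `u0,u1` and between `u0,u4`,
and simple arcs `u4u1, u1u3, u1u2, u3u4, u2u4, u3u0, u0u2, u2u3`. -/
def digraphH5 : SimpleDigraph (Fin 5) :=
  digraphOfPairs 5 [(0,1),(1,0),(0,4),(4,0),(4,1),(1,3),(1,2),(3,4),(2,4),(3,0),(0,2),(2,3)]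
    (by decide)

/-- The Paley tournament `P7` on `ℤ/7ℤ`: an arc from `i` to `j` iff `j - i ∈ {1, 2, 4}`. -/
def dirP7 : SimpleDigraph (Fin 7) :=
  ⟨fun i j => j - i = 1 ∨ j - i = 2 ∨ j - i = 4, by decide⟩

/-- The rotative digraph `R(↔K2, ↔K2)`: digons `{0,1}` and `{2,3}`, all arcs from `{0,1}`
to `{2,3}`, all arcs from `{2,3}` to the extra vertex `4`, all arcs from `4` to `{0,1}`. -/
def rotK2K2 : SimpleDigraph (Fin 5) :=
  digraphOfPairs 5 [(0,1),(1,0),(2,3),(3,2),(0,2),(0,3),(1,2),(1,3),(2,4),(3,4),(4,0),(4,1)]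
    (by decide)

/-- The rotative digraph `R(↔K2, C3)`. -/
def rotK2C3 : SimpleDigraph (Fin 6) :=
  digraphOfPairs 6 [(0,1),(1,0),(2,3),(3,4),(4,2),(0,2),(0,3),(0,4),(1,2),(1,3),(1,4),
    (2,5),(3,5),(4,5),(5,0),(5,1)] (by decide)

/-- The rotative digraph `R(C3, ↔K2)`. -/
def rotC3K2 : SimpleDigraph (Fin 6) :=
  digraphOfPairs 6 [(0,1),(1,2),(2,0),(3,4),(4,3),(0,3),(0,4),(1,3),(1,4),(2,3),(2,4),
    (3,5),(4,5),(5,0),(5,1),(5,2)] (by decide)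

/-- The rotative digraph `R(C3, C3)`. -/
def rotC3C3 : SimpleDigraph (Fin 7) :=
  digraphOfPairs 7 [(0,1),(1,2),(2,0),(3,4),(4,5),(5,3),(0,3),(0,4),(0,5),(1,3),(1,4),(1,5),
    (2,3),(2,4),(2,5),(3,6),(4,6),(5,6),(6,0),(6,1),(6,2)] (by decide)

/-- The dearth of a graph `T`:
`Σ_{v : deg(v) ≥ 3} deg(v)(deg(v)-1)/6` plus the number of odd pairs of `T`
(pairs of non-adjacent vertices at odd distance). -/
noncomputable def dearth {W : Type} [Fintype W] (T : SimpleGraph W) [DecidableRel T.Adj] : ℚ :=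
  (∑ v ∈ Finset.univ.filter (fun v => 3 ≤ T.degree v),
      (T.degree v : ℚ) * ((T.degree v : ℚ) - 1) / 6) +
  (Nat.card {p : Sym2 W // ∃ u w : W, p = s(u, w) ∧ u ≠ w ∧ ¬ T.Adj u w ∧ Odd (T.dist u w)} : ℚ)

/-!
Deleting an arc `x → y` of a 3-dicritical digraph leaves a 2-dicolouring in which `x` and `y`
have the same colour, while the two ends of a digon always get different colours. Colours
therefore alternate along the bidirected tree, so two vertices at odd distance `≥ 3` in `T` are
joined by no arc. Among three tree-neighbours of a vertex `v` some pair is joined by no arc: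
otherwise they span either a transitive triangle `x → y → z`, `x → z`, and the dicolouring of
`D - xz` would dicolour `D` because `x → y → z` bypasses `xz`, or a directed triangle, which with
`v` forms a copy of `W3`, hence all of `D`. Double counting triples of neighbours gives
`d(v)(d(v)-1)/6` such pairs at each `v`; they are at distance `2` in `T`, so those at different
vertices are distinct, and distinct from the odd pairs.
-/

namespace SimpleGraph

open Finset

variable {W : Type} {G T : SimpleGraph W}

def oddPairGraph (T : SimpleGraph W) : SimpleGraph W where
  Adj u w := u ≠ w ∧ ¬ T.Adj u w ∧ Odd (T.dist u w)
  symm := ⟨fun _ _ h => ⟨h.1.symm, fun h' => h.2.1 h'.symm, T.dist_comm ▸ h.2.2⟩⟩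
  loopless := ⟨fun _ h => h.1 rfl⟩

theorem isPath_cons_cons_nil {a b v : W} (hva : T.Adj v a) (hvb : T.Adj v b) (hab : a ≠ b) :
    (Walk.cons hva.symm (Walk.cons hvb .nil)).IsPath := by
  simp [Walk.cons_isPath_iff, hva.ne', hvb.ne, hab]

theorem IsAcyclic.eq_of_adj_of_adj (hT : T.IsAcyclic) {a b v v' : W} (hab : a ≠ b)
    (hva : T.Adj v a) (hvb : T.Adj v b) (hva' : T.Adj v' a) (hvb' : T.Adj v' b) : v = v' := by
  have := (hT.subsingleton_path a b).elim ⟨_, isPath_cons_cons_nil hva hvb hab⟩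
    ⟨_, isPath_cons_cons_nil hva' hvb' hab⟩
  simpa using congrArg (fun p : T.Path a b => p.1.snd) this

theorem IsAcyclic.dist_eq_two (hT : T.IsAcyclic) {a b v : W} (hab : a ≠ b)
    (hva : T.Adj v a) (hvb : T.Adj v b) : T.dist a b = 2 := by
  obtain ⟨p, hp, hlen⟩ := (Walk.cons hva.symm (Walk.cons hvb .nil)).reachable.exists_path_of_dist
  have := (hT.subsingleton_path a b).elim ⟨p, hp⟩ ⟨_, isPath_cons_cons_nil hva hvb hab⟩
  simp_all

theorem natCard_exists_eq_mk_eq_card_edgeFinset [Fintype W] [DecidableRel G.Adj] :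
    Nat.card {e : Sym2 W // ∃ u w, e = s(u, w) ∧ G.Adj u w} = #G.edgeFinset := by
  rw [edgeFinset_card, ← Nat.card_eq_fintype_card]
  refine Nat.card_congr (Equiv.subtypeEquivRight fun e => ⟨?_, fun h => ?_⟩)
  · rintro ⟨u, w, rfl, h⟩
    exact h
  · induction e using Sym2.ind with
    | h u w => exact ⟨u, w, rfl, h⟩

/-- Each pair lies in `#N - 2` triples of `N`, and each triple contains an edge. -/
theorem choose_three_le_mul_card_edgeFinset_inter_sym2 [Fintype W] [DecidableEq W]
    [DecidableRel G.Adj] (N : Finset W) (h : ∀ t ∈ N.powersetCard 3, ∃ a ∈ t, ∃ b ∈ t, G.Adj a b) :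
    (#N).choose 3 ≤ (#N - 2) * #(G.edgeFinset ∩ N.sym2) := by
  rw [← card_powersetCard, mul_comm, ← mul_one #(N.powersetCard 3)]
  refine card_mul_le_card_mul (fun t e => e ∈ t.sym2) (fun t ht => ?_) (fun e he => ?_)
  · obtain ⟨a, ha, b, hb, hab⟩ := h t ht
    have hsub := (mem_powersetCard.mp ht).1
    exact one_le_card.mpr ⟨s(a, b), (mem_bipartiteAbove _).mpr ⟨mem_inter.mpr
      ⟨mem_edgeFinset.mpr hab, mk_mem_sym2_iff.mpr ⟨hsub ha, hsub hb⟩⟩,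
      mk_mem_sym2_iff.mpr ⟨ha, hb⟩⟩⟩
  · obtain ⟨heG, heN⟩ := mem_inter.mp he
    induction e using Sym2.ind with | h a b => ?_
    have hab : a ≠ b := (mem_edgeFinset.mp heG).ne
    have habN : {a, b} ⊆ N := by simpa [insert_subset_iff] using heN
    have hpair : ∀ t ∈ (N.powersetCard 3).bipartiteBelow (fun t e => e ∈ t.sym2) s(a, b),
        t ⊆ N ∧ #t = 3 ∧ {a, b} ⊆ t := fun t ht => by
      simp_all [mem_bipartiteBelow, mem_powersetCard, insert_subset_iff]
    calc #((N.powersetCard 3).bipartiteBelow _ s(a, b))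
        ≤ #((N \ {a, b}).powersetCard 1) := by
          refine card_le_card_of_injOn (· \ {a, b}) (fun t ht => ?_) (fun t ht t' ht' htt' => ?_)
          · obtain ⟨htN, ht3, habt⟩ := hpair t ht
            refine mem_coe.mpr (mem_powersetCard.mpr ⟨sdiff_subset_sdiff htN subset_rfl, by
              rw [card_sdiff_of_subset habt, ht3, card_pair hab]⟩)
          · rw [← sdiff_union_of_subset (hpair t ht).2.2,
              ← sdiff_union_of_subset (hpair t' ht').2.2]
            exact congrArg (· ∪ {a, b}) htt'
      _ = #N - 2 := by rw [card_powersetCard, card_sdiff_of_subset habN, card_pair hab]; simp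

theorem mul_pred_div_six_le_card_edgeFinset_inter_sym2 [Fintype W] [DecidableEq W]
    [DecidableRel G.Adj] (N : Finset W) (hN : 3 ≤ #N)
    (h : ∀ t ∈ N.powersetCard 3, ∃ a ∈ t, ∃ b ∈ t, G.Adj a b) :
    (#N : ℚ) * (#N - 1) / 6 ≤ #(G.edgeFinset ∩ N.sym2) := by
  have key := choose_three_le_mul_card_edgeFinset_inter_sym2 N h
  obtain ⟨d, hd⟩ : ∃ d, #N = d + 3 := ⟨#N - 3, by omega⟩
  set E := #(G.edgeFinset ∩ N.sym2)
  rw [hd, show d + 3 - 2 = d + 1 by omega] at key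
  have h6 : 6 * (d + 3).choose 3 = (d + 3) * (d + 2) * (d + 1) := by
    rw [show 6 = (3).factorial from rfl, ← Nat.descFactorial_eq_factorial_mul_choose]
    simp [Nat.descFactorial]
    ring
  have hE : (d + 3) * (d + 2) ≤ 6 * E := by
    refine Nat.le_of_mul_le_mul_right ?_ (Nat.succ_pos d)
    calc (d + 3) * (d + 2) * (d + 1) = 6 * (d + 3).choose 3 := h6.symm
      _ ≤ 6 * ((d + 1) * E) := by gcongr
      _ = 6 * E * (d + 1) := by ring
  have hE' : ((d + 3) * (d + 2) : ℚ) ≤ 6 * E := by exact_mod_cast hE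
  rw [hd, div_le_iff₀ (by norm_num)]
  push_cast
  linear_combination hE'

theorem sum_card_inter_sym2_neighborFinset_add_card_le [Fintype W] [DecidableEq W]
    [DecidableRel T.Adj] [DecidableRel G.Adj] [DecidableRel T.oddPairGraph.Adj]
    (hT : T.IsAcyclic) (hodd : T.oddPairGraph ≤ G) (F : Finset W) :
    ∑ v ∈ F, #(G.edgeFinset ∩ (T.neighborFinset v).sym2) + #T.oddPairGraph.edgeFinset ≤
      #G.edgeFinset := by
  let P v := G.edgeFinset ∩ (T.neighborFinset v).sym2
  have hP : ∀ {v e}, e ∈ P v → ∃ a b, e = s(a, b) ∧ a ≠ b ∧ T.Adj v a ∧ T.Adj v b := by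
    intro v e he
    induction e using Sym2.ind with | h a b => ?_
    simp only [P, mem_inter, mem_edgeFinset, mk_mem_sym2_iff, mem_neighborFinset] at he
    exact ⟨a, b, rfl, he.1.ne, he.2⟩
  have hPdisj : (F : Set W).PairwiseDisjoint P := by
    intro v _ v' _ hvv'
    refine Finset.disjoint_left.mpr fun e he he' => hvv' ?_
    obtain ⟨a, b, rfl, hab, hva, hvb⟩ := hP he
    obtain ⟨hva', hvb'⟩ : T.Adj v' a ∧ T.Adj v' b := by
      simpa [P, mk_mem_sym2_iff] using (mem_inter.mp he').2
    exact hT.eq_of_adj_of_adj hab hva hvb hva' hvb'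
  have hOdisj : Disjoint (F.biUnion P) T.oddPairGraph.edgeFinset := by
    refine Finset.disjoint_left.mpr fun e he hodd' => ?_
    obtain ⟨v, -, hv⟩ := mem_biUnion.mp he
    obtain ⟨a, b, rfl, hab, hva, hvb⟩ := hP hv
    have := (mem_edgeFinset.mp hodd').2.2
    rw [hT.dist_eq_two hab hva hvb] at this
    exact Nat.not_odd_iff_even.mpr even_two this
  rw [← card_biUnion hPdisj, ← card_union_of_disjoint hOdisj]
  exact card_le_card <|
    union_subset (biUnion_subset.mpr fun v _ => inter_subset_left) (edgeFinset_mono hodd)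

theorem dearth_le_card_edgeFinset [Fintype W] [DecidableRel T.Adj] [DecidableRel G.Adj]
    (hT : T.IsAcyclic) (hodd : T.oddPairGraph ≤ G)
    (htri : ∀ v, ∀ t ∈ (T.neighborFinset v).powersetCard 3, ∃ a ∈ t, ∃ b ∈ t, G.Adj a b) :
    dearth T ≤ #G.edgeFinset := by
  classical
  let F : Finset W := {v | 3 ≤ T.degree v}
  have hcard := sum_card_inter_sym2_neighborFinset_add_card_le hT hodd F
  change _ + (Nat.card {e : Sym2 W // ∃ u w, e = s(u, w) ∧ T.oddPairGraph.Adj u w} : ℚ) ≤ _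
  rw [natCard_exists_eq_mk_eq_card_edgeFinset]
  calc _ ≤ ∑ v ∈ F, (#(G.edgeFinset ∩ (T.neighborFinset v).sym2) : ℚ) +
        #T.oddPairGraph.edgeFinset := by
        gcongr with v hv
        have hv : 3 ≤ #(T.neighborFinset v) := by
          simpa [card_neighborFinset_eq_degree, F] using hv
        simpa [card_neighborFinset_eq_degree] using
          mul_pred_div_six_le_card_edgeFinset_inter_sym2 _ hv (htri v)
    _ ≤ _ := by exact_mod_cast hcard

end SimpleGraph

namespace SimpleDigraph

variable {V W : Type} {D : SimpleDigraph V}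

theorem Adj.ne {u v : V} (h : D.Adj u v) : u ≠ v :=
  fun e => D.loopless u (e ▸ h)

theorem AcyclicRel.of_forall_transGen {R S : V → V → Prop} (hS : AcyclicRel S)
    (h : ∀ a b, R a b → Relation.TransGen S a b) : AcyclicRel R :=
  fun v hv => hS v (Relation.TransGen.closed h v v hv)

def IsDicolouring (A : V → V → Prop) (φ : V → Fin 2) : Prop :=
  ∀ i, AcyclicRel fun a b => A a b ∧ φ a = i ∧ φ b = i

def deleteArc (D : SimpleDigraph V) (x y : V) : V → V → Prop :=
  fun a b => D.Adj a b ∧ ¬(a = x ∧ b = y)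

private theorem fin_two_eq_iff_ne_of_ne {a b c : Fin 2} (h : a ≠ b) : a = c ↔ b ≠ c := by
  revert a b c; decide

namespace IsDicolouring

variable {A : V → V → Prop} {φ : V → Fin 2}

theorem ne_of_digon (hφ : IsDicolouring A φ) {a b : V} (hab : A a b) (hba : A b a) :
    φ a ≠ φ b :=
  fun h => hφ (φ b) a (.head ⟨hab, h, rfl⟩ (.single ⟨hba, rfl, h⟩))

theorem eq_of_digons (hφ : IsDicolouring A φ) {p x y : V} (hx : A p x ∧ A x p)
    (hy : A p y ∧ A y p) : φ x = φ y :=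
  (fin_two_eq_iff_ne_of_ne (hφ.ne_of_digon hx.2 hx.1)).2 (hφ.ne_of_digon hy.1 hy.2)

theorem eq_iff_even_length {T : SimpleGraph W} (hφ : IsDicolouring A φ) {f : W → V}
    (hf : ∀ a b, T.Adj a b → A (f a) (f b) ∧ A (f b) (f a)) {u w : W} (p : T.Walk u w) :
    φ (f u) = φ (f w) ↔ Even p.length := by
  induction p with
  | nil => simp
  | cons h p ih =>
    rw [SimpleGraph.Walk.length_cons, Nat.even_add_one, ← ih]
    exact fin_two_eq_iff_ne_of_ne (hφ.ne_of_digon (hf _ _ h).1 (hf _ _ h).2)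

end IsDicolouring

theorem not_dicolourable2_dirW3 : ¬ dirW3.Dicolourable2 := by
  rintro ⟨φ, hφ⟩
  have hφ : IsDicolouring dirW3.Adj φ := hφ
  have h01 : φ 0 = φ 1 := hφ.eq_of_digons (p := 3) ⟨?_, ?_⟩ ⟨?_, ?_⟩
  have h02 : φ 0 = φ 2 := hφ.eq_of_digons (p := 3) ⟨?_, ?_⟩ ⟨?_, ?_⟩
  refine hφ (φ 0) 0 (.head ⟨?_, rfl, h01.symm⟩
    (.head ⟨?_, h01.symm, h02.symm⟩ (.single ⟨?_, h02.symm, rfl⟩)))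
  all_goals simp [dirW3, digraphOfPairs]

theorem containsSub_dirW3 {p x y z : V}
    (dx : D.Adj p x ∧ D.Adj x p) (dy : D.Adj p y ∧ D.Adj y p) (dz : D.Adj p z ∧ D.Adj z p)
    (hxy : D.Adj x y) (hyz : D.Adj y z) (hzx : D.Adj z x) : D.ContainsSub dirW3 := by
  have := dx.1.ne; have := dy.1.ne; have := dz.1.ne
  have := hxy.ne; have := hyz.ne; have := hzx.ne
  refine ⟨![x, y, z, p], fun i j h => ?_, fun i j h => ?_⟩
  · fin_cases i <;> fin_cases j <;> simp_all [eq_comm]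
  · fin_cases i <;> fin_cases j <;> simp_all [dirW3, digraphOfPairs]

namespace Dicritical3

theorem exists_isDicolouring_deleteArc (hD : D.Dicritical3) {x y : V} (hxy : D.Adj x y) :
    ∃ φ, IsDicolouring (D.deleteArc x y) φ ∧ φ x = φ y := by
  have hne : D.deleteArc x y ≠ D.Adj := fun h => (h ▸ hxy : D.deleteArc x y x y).2 ⟨rfl, rfl⟩
  obtain ⟨φ, hφ⟩ := hD.2 Set.univ _ (fun _ _ h => ⟨trivial, trivial, h.1⟩) (.inr hne)
  refine ⟨φ, hφ, by_contra fun hφxy => hD.1 ⟨φ, fun i => (hφ i).of_forall_transGen ?_⟩⟩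
  rintro a b ⟨hab, rfl, hb⟩
  exact .single ⟨⟨hab, fun ⟨ha, hb'⟩ => hφxy (ha ▸ hb' ▸ hb.symm)⟩, rfl, hb⟩

theorem false_of_digons_of_transitive (hD : D.Dicritical3) {p x y z : V}
    (dx : D.Adj p x ∧ D.Adj x p) (dy : D.Adj p y ∧ D.Adj y p) (dz : D.Adj p z ∧ D.Adj z p)
    (hxy : D.Adj x y) (hyz : D.Adj y z) (hxz : D.Adj x z) : False := by
  obtain ⟨φ, hφ, hφxz⟩ := hD.exists_isDicolouring_deleteArc hxz
  have hp : ∀ {u}, D.Adj p u ∧ D.Adj u p → D.deleteArc x z p u ∧ D.deleteArc x z u p :=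
    fun h => ⟨⟨h.1, fun e => dx.1.ne e.1⟩, ⟨h.2, fun e => dz.1.ne e.2⟩⟩
  have hφxy : φ x = φ y := hφ.eq_of_digons (hp dx) (hp dy)
  -- the deleted arc `x → z` is bypassed by the monochromatic path `x → y → z`
  refine hD.1 ⟨φ, fun i => (hφ i).of_forall_transGen ?_⟩
  rintro a b ⟨hab, rfl, hb⟩
  by_cases e : a = x ∧ b = z
  · obtain ⟨rfl, rfl⟩ := e
    exact .head ⟨⟨hxy, fun e => hyz.ne e.2⟩, rfl, hφxy.symm⟩
      (.single ⟨⟨hyz, fun e => hxy.ne e.1.symm⟩, hφxy.symm, hb⟩)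
  · exact .single ⟨⟨hab, e⟩, rfl, hb⟩

theorem iso_of_containsSub (hD : D.Dicritical3) {H : SimpleDigraph W}
    (hH : ¬ H.Dicolourable2) (h : D.ContainsSub H) : D.Iso H := by
  obtain ⟨g, hg, hgH⟩ := h
  let A : V → V → Prop := fun u v => ∃ a b, g a = u ∧ g b = v ∧ H.Adj a b
  have hA : ¬ Dicolourable2Rel A := fun ⟨φ, hφ⟩ => hH ⟨φ ∘ g, fun i v hv =>
    hφ i (g v) (hv.lift g fun a b hab => ⟨⟨a, b, rfl, rfl, hab.1⟩, hab.2⟩)⟩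
  have hsub : D.IsSubdigraphOn (Set.range g) A := by
    rintro _ _ ⟨a, b, rfl, rfl, hab⟩
    exact ⟨⟨a, rfl⟩, ⟨b, rfl⟩, hgH a b hab⟩
  obtain ⟨hrange, hAD⟩ : Set.range g = Set.univ ∧ A = D.Adj := by
    by_contra hne
    exact hA (hD.2 _ A hsub (not_and_or.mp hne))
  have hbij : Function.Bijective g := ⟨hg, Set.range_eq_univ.mp hrange⟩
  refine ⟨(Equiv.ofBijective g hbij).symm, fun u v => ?_⟩
  obtain ⟨a, rfl⟩ := hbij.2 u
  obtain ⟨b, rfl⟩ := hbij.2 v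
  simp [← hAD, A, hg.eq_iff]

theorem false_of_digons_of_path (hD : D.Dicritical3) (hW3 : ¬ D.Iso dirW3) {p x y z : V}
    (dx : D.Adj p x ∧ D.Adj x p) (dy : D.Adj p y ∧ D.Adj y p) (dz : D.Adj p z ∧ D.Adj z p)
    (hxy : D.Adj x y) (hyz : D.Adj y z) (hxz : D.Adj x z ∨ D.Adj z x) : False :=
  hxz.elim (hD.false_of_digons_of_transitive dx dy dz hxy hyz) fun hzx =>
    hW3 (hD.iso_of_containsSub not_dicolourable2_dirW3 (containsSub_dirW3 dx dy dz hxy hyz hzx))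

theorem nonAdj_of_digons (hD : D.Dicritical3) (hW3 : ¬ D.Iso dirW3) {p x y z : V}
    (dx : D.Adj p x ∧ D.Adj x p) (dy : D.Adj p y ∧ D.Adj y p) (dz : D.Adj p z ∧ D.Adj z p) :
    (¬ D.Adj x y ∧ ¬ D.Adj y x) ∨ (¬ D.Adj x z ∧ ¬ D.Adj z x) ∨
      (¬ D.Adj y z ∧ ¬ D.Adj z y) := by
  simp only [← not_or]
  by_contra! ⟨hxy | hyx, hxz | hzx, hyz | hzy⟩ <;>
  first
  | exact hD.false_of_digons_of_path hW3 dx dy dz ‹_› ‹_› (by tauto)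
  | exact hD.false_of_digons_of_path hW3 dx dz dy ‹_› ‹_› (by tauto)
  | exact hD.false_of_digons_of_path hW3 dy dx dz ‹_› ‹_› (by tauto)
  | exact hD.false_of_digons_of_path hW3 dy dz dx ‹_› ‹_› (by tauto)
  | exact hD.false_of_digons_of_path hW3 dz dx dy ‹_› ‹_› (by tauto)
  | exact hD.false_of_digons_of_path hW3 dz dy dx ‹_› ‹_› (by tauto)

end Dicritical3

def nonAdjGraph (D : SimpleDigraph V) (f : W → V) : SimpleGraph W where
  Adj u w := u ≠ w ∧ ¬ D.Adj (f u) (f w) ∧ ¬ D.Adj (f w) (f u)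
  symm := ⟨fun _ _ h => ⟨h.1.symm, h.2.2, h.2.1⟩⟩
  loopless := ⟨fun _ h => h.1 rfl⟩

theorem Dicritical3.oddPairGraph_le_nonAdjGraph (hD : D.Dicritical3) {T : SimpleGraph W}
    {f : W → V} (hinj : Function.Injective f)
    (hdigon : ∀ a b, T.Adj a b → D.Adj (f a) (f b) ∧ D.Adj (f b) (f a)) :
    T.oddPairGraph ≤ D.nonAdjGraph f := by
  have noArc : ∀ u w, T.oddPairGraph.Adj u w → ¬ D.Adj (f u) (f w) := by
    rintro u w ⟨-, hnadj, hodd⟩ harc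
    obtain ⟨φ, hφ, hφuw⟩ := hD.exists_isDicolouring_deleteArc harc
    -- the digons of the tree survive, since the deleted arc joins non-adjacent vertices of `T`
    have hf : ∀ a b, T.Adj a b → D.deleteArc (f u) (f w) (f a) (f b) ∧
        D.deleteArc (f u) (f w) (f b) (f a) := fun a b hab =>
      ⟨⟨(hdigon a b hab).1, fun ⟨ha, hb⟩ => hnadj (hinj ha ▸ hinj hb ▸ hab)⟩,
        ⟨(hdigon a b hab).2, fun ⟨hb, ha⟩ => hnadj (hinj ha ▸ hinj hb ▸ hab.symm)⟩⟩
    obtain ⟨p, hp⟩ := SimpleGraph.exists_walk_of_dist_ne_zero hodd.pos.ne'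
    exact Nat.not_even_iff_odd.mpr hodd (hp ▸ (hφ.eq_iff_even_length hf p).mp hφuw)
  exact fun u w h => ⟨h.1, noArc u w h, noArc w u h.symm⟩

theorem Dicritical3.exists_nonAdjGraph_adj_of_digons [DecidableEq W] (hD : D.Dicritical3)
    (hW3 : ¬ D.Iso dirW3) {f : W → V} {p : V} {t : Finset W} (ht : t.card = 3)
    (hdigon : ∀ a ∈ t, D.Adj p (f a) ∧ D.Adj (f a) p) :
    ∃ a ∈ t, ∃ b ∈ t, (D.nonAdjGraph f).Adj a b := by
  obtain ⟨a, b, c, hab, hac, hbc, rfl⟩ := Finset.card_eq_three.mp ht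
  rcases hD.nonAdj_of_digons hW3 (hdigon a (by simp)) (hdigon b (by simp))
    (hdigon c (by simp)) with h | h | h
  · exact ⟨a, by simp, b, by simp, hab, h⟩
  · exact ⟨a, by simp, c, by simp, hac, h⟩
  · exact ⟨b, by simp, c, by simp, hbc, h⟩

end SimpleDigraph

theorem dearth_le_nonadjacent_pairs_general
    {V W : Type} [Fintype W] (D : SimpleDigraph V) (hD : D.Dicritical3)
    (hW3 : ¬ D.Iso dirW3)
    (T : SimpleGraph W) [DecidableRel T.Adj] (hT : T.IsTree)
    (f : W → V) (hinj : Function.Injective f)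
    (hdigon : ∀ a b : W, T.Adj a b → D.Adj (f a) (f b) ∧ D.Adj (f b) (f a)) :
    dearth T ≤
      (Nat.card {p : Sym2 W // ∃ u w : W, p = s(u, w) ∧ u ≠ w ∧
        ¬ D.Adj (f u) (f w) ∧ ¬ D.Adj (f w) (f u)} : ℚ) := by
  classical
  have htri : ∀ v, ∀ t ∈ (T.neighborFinset v).powersetCard 3,
      ∃ a ∈ t, ∃ b ∈ t, (D.nonAdjGraph f).Adj a b := by
    intro v t ht
    obtain ⟨htN, ht3⟩ := Finset.mem_powersetCard.mp ht
    exact hD.exists_nonAdjGraph_adj_of_digons hW3 ht3 fun a ha =>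
      hdigon v a ((T.mem_neighborFinset v a).mp (htN ha))
  have := SimpleGraph.dearth_le_card_edgeFinset hT.isAcyclic
    (hD.oddPairGraph_le_nonAdjGraph hinj hdigon) htri
  rwa [← SimpleGraph.natCard_exists_eq_mk_eq_card_edgeFinset] at this

/-- Let `D` be a 3-dicritical digraph distinct from `↔K3` and from the
directed wheel `W3`, and let `↔T` be a bidirected tree contained in `D`, given by a tree
`T` and an injection `f` of its vertices into `D` such that every edge of `T` corresponds
to a digon of `D`. Then the number of unordered pairs of distinct vertices of `T` joined
by no arc of `D` is at least `dearth(T)`. -/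
theorem dearth_le_nonadjacent_pairs
    {V W : Type} [Fintype V] [Fintype W] (D : SimpleDigraph V) (hD : D.Dicritical3)
    (hK3 : ¬ D.Iso biK3) (hW3 : ¬ D.Iso dirW3)
    (T : SimpleGraph W) [DecidableRel T.Adj] (hT : T.IsTree)
    (f : W → V) (hinj : Function.Injective f)
    (hdigon : ∀ a b : W, T.Adj a b → D.Adj (f a) (f b) ∧ D.Adj (f b) (f a)) :
    dearth T ≤
      (Nat.card {p : Sym2 W // ∃ u w : W, p = s(u, w) ∧ u ≠ w ∧
        ¬ D.Adj (f u) (f w) ∧ ¬ D.Adj (f w) (f u)} : ℚ) :=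
  dearth_le_nonadjacent_pairs_general D hD hW3 T hT f hinj hdigon
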